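/- Fix n ≥ 1, let (α i)_{i : Fin (n*n)} be an orthonormal basis of Mₙ(ℂ) for the Hilbert–Schmidt inner product, and let δ : Mₙ(ℂ) → M_{n·n}(ℂ) be the unique linear map with δ(α i) = (α i) ⊗ₖ (α i). If δ is completely positive, then for all matrices a, b ∈ Mₙ(ℂ): δ(1)·δ(a·b) = δ(a)·δ(b), where the products on both sides are matrix products (in Mₙ(ℂ) inside δ, and in M_{n·n}(ℂ) outside). -/

import Mathlib

/-! By Choi's theorem the completely positive map `δ` has a Kraus form `δ a = ∑ₜ Vₜ a Vₜᴴ`.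
Since `δ` sends the orthonormal basis `αᵢ` to the orthonormal family `αᵢ ⊗ₖ αᵢ`, its
Hilbert–Schmidt adjoint `b ↦ ∑ₜ Vₜᴴ b Vₜ` is a left inverse of `δ`. Hence the operators `Vₛᴴ Vₜ`
form a Kraus family of the identity map, and such operators are scalars. Then
`δ a * δ b = ∑ₛₜ Vₛ a (Vₛᴴ Vₜ) b Vₜᴴ` and `δ 1 * δ (a * b) = ∑ₛₜ Vₛ (Vₛᴴ Vₜ) a b Vₜᴴ` agree. -/

open Matrix Kronecker ComplexOrder

noncomputable section

def hsInner {m : Type*} [Fintype m] (a b : Matrix m m ℂ) : ℂ :=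
  (aᴴ * b).trace

def amplify {p q : Type*} [Fintype p] [Fintype q]
    (Φ : Matrix p p ℂ →ₗ[ℂ] Matrix q q ℂ) (k : ℕ)
    (M : Matrix (Fin k × p) (Fin k × p) ℂ) :
    Matrix (Fin k × q) (Fin k × q) ℂ :=
  Matrix.of fun i j => Φ (Matrix.of fun a b => M (i.1, a) (j.1, b)) i.2 j.2

def IsCompletelyPositive {p q : Type*} [Fintype p] [Fintype q]
    (Φ : Matrix p p ℂ →ₗ[ℂ] Matrix q q ℂ) : Prop :=
  ∀ (k : ℕ) (M : Matrix (Fin k × p) (Fin k × p) ℂ),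
    M.PosSemidef → (amplify Φ k M).PosSemidef

section Kraus

variable {m n p ι κ : Type*} [Fintype n] [Fintype ι] [Fintype κ]

def krausMap (V : ι → Matrix m n ℂ) : Matrix n n ℂ →ₗ[ℂ] Matrix m m ℂ where
  toFun a := ∑ i, V i * a * (V i)ᴴ
  map_add' a b := by simp only [Matrix.mul_add, Matrix.add_mul, Finset.sum_add_distrib]
  map_smul' c a := by
    simp only [Matrix.mul_smul, Matrix.smul_mul, Finset.smul_sum, RingHom.id_apply]

theorem krausMap_apply (V : ι → Matrix m n ℂ) (a : Matrix n n ℂ) :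
    krausMap V a = ∑ i, V i * a * (V i)ᴴ := rfl

theorem krausMap_krausMap [Fintype m] (U : κ → Matrix p m ℂ) (V : ι → Matrix m n ℂ)
    (a : Matrix n n ℂ) :
    krausMap U (krausMap V a) = krausMap (fun k : κ × ι => U k.1 * V k.2) a := by
  simp only [krausMap_apply, Matrix.mul_sum, Matrix.sum_mul, Fintype.sum_prod_type,
    conjTranspose_mul, Matrix.mul_assoc]

theorem hsInner_krausMap [Fintype m] (V : ι → Matrix m n ℂ) (a : Matrix n n ℂ)
    (b : Matrix m m ℂ) :
    hsInner (krausMap V a) b = hsInner a (krausMap (fun i => (V i)ᴴ) b) := by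
  simp only [hsInner, krausMap_apply, conjTranspose_sum, conjTranspose_mul,
    conjTranspose_conjTranspose, Matrix.sum_mul, Matrix.mul_sum, trace_sum, Matrix.mul_assoc]
  refine Finset.sum_congr rfl fun i _ => ?_
  rw [trace_mul_comm]
  simp only [Matrix.mul_assoc]

end Kraus

theorem mul_single_one_mul_conjTranspose_apply {m n p : Type*} [Fintype n] [DecidableEq n]
    (A : Matrix m n ℂ) (B : Matrix p n ℂ) (i j : n) (c : m) (d : p) :
    (A * single i j (1 : ℂ) * Bᴴ) c d = A c i * star (B d j) := by
  simp [Matrix.mul_apply, single, conjTranspose_apply, ite_and]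

theorem IsCompletelyPositive.exists_eq_krausMap {n : ℕ} {q : Type*} [Fintype q]
    {Φ : Matrix (Fin n) (Fin n) ℂ →ₗ[ℂ] Matrix q q ℂ} (hΦ : IsCompletelyPositive Φ) :
    ∃ (m : ℕ) (V : Fin m → Matrix q (Fin n) ℂ), Φ = krausMap V := by
  -- `amplify Φ n` of the projection onto `∑ᵢ eᵢ ⊗ eᵢ` is the Choi matrix of `Φ`, with blocks
  -- `Φ (single i j 1)`; a rank-one decomposition of it yields the Kraus operators.
  let v : Fin n × Fin n → ℂ := fun p => if p.1 = p.2 then 1 else 0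
  obtain ⟨m, w, hw⟩ :=
    posSemidef_iff_eq_sum_vecMulVec.mp (hΦ n _ (posSemidef_vecMulVec_self_star v))
  refine ⟨m, fun t => of fun c i => w t (i, c), (stdBasis ℂ _ _).ext fun ⟨i, j⟩ => ?_⟩
  have hblock : (of fun a b => vecMulVec v (star v) (i, a) (j, b)) = single i j (1 : ℂ) := by
    ext a b
    by_cases ha : i = a <;> by_cases hb : j = b <;> simp [v, vecMulVec_apply, single, ha, hb]
  ext c d
  have hchoi : Φ (single i j 1) c d = ∑ t, w t (i, c) * star (w t (j, d)) := by
    rw [← hblock]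
    exact (congr_fun (congr_fun hw (i, c)) (j, d)).trans
      (by simp [Matrix.sum_apply, vecMulVec_apply])
  simp [stdBasis_eq_single, krausMap_apply, Matrix.sum_apply,
    mul_single_one_mul_conjTranspose_apply, hchoi]

theorem hsInner_kronecker {m l : Type*} [Fintype m] [Fintype l]
    (a b : Matrix m m ℂ) (c d : Matrix l l ℂ) :
    hsInner (a ⊗ₖ c) (b ⊗ₖ d) = hsInner a b * hsInner c d := by
  rw [hsInner, hsInner, hsInner, conjTranspose_kronecker, ← mul_kronecker_mul, trace_kronecker]

theorem eq_of_forall_hsInner_eq {m ι : Type*} [Fintype m] {α : ι → Matrix m m ℂ}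
    (hspan : Submodule.span ℂ (Set.range α) = ⊤) {x y : Matrix m m ℂ}
    (h : ∀ i, hsInner (α i) x = hsInner (α i) y) : x = y := by
  have hperp : ∀ w ∈ Submodule.span ℂ (Set.range α), hsInner w (x - y) = 0 := by
    intro w hw
    induction hw using Submodule.span_induction with
    | mem _ hw =>
      obtain ⟨i, rfl⟩ := hw
      simpa [hsInner, Matrix.mul_sub, sub_eq_zero] using h i
    | zero => simp [hsInner]
    | add _ _ _ _ hv hw => simp_all [hsInner, Matrix.add_mul]
    | smul _ _ _ hw => simp_all [hsInner]
  have hself := hperp (x - y) (hspan ▸ Submodule.mem_top)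
  rwa [hsInner, trace_conjTranspose_mul_self_eq_zero_iff, sub_eq_zero] at hself

theorem krausMap_conjTranspose_comp_eq_id {m ι κ : Type*} [Fintype m] [DecidableEq ι]
    [Fintype κ] {α : ι → Matrix m m ℂ}
    (horth : ∀ i j, hsInner (α i) (α j) = if i = j then 1 else 0)
    (hspan : Submodule.span ℂ (Set.range α) = ⊤)
    {V : κ → Matrix (m × m) m ℂ} (hV : ∀ i, krausMap V (α i) = α i ⊗ₖ α i) :
    krausMap (fun k => (V k)ᴴ) ∘ₗ krausMap V = LinearMap.id := by
  refine LinearMap.ext_on hspan ?_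
  rintro _ ⟨i, rfl⟩
  refine eq_of_forall_hsInner_eq hspan fun j => ?_
  have hV' := hsInner_krausMap V (α j) (α i ⊗ₖ α i)
  rw [hV, hsInner_kronecker, horth] at hV'
  rw [LinearMap.comp_apply, hV, ← hV', LinearMap.id_apply, horth]
  split_ifs <;> simp

theorem mem_range_scalar_of_apply {n R : Type*} [Fintype n] [DecidableEq n] [Semiring R]
    {M : Matrix n n R} (hoff : ∀ i j, i ≠ j → M i j = 0) (hdiag : ∀ i j, M i i = M j j) :
    M ∈ Set.range (scalar n) := by
  refine mem_range_scalar_of_commute_single fun a b hab => ?_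
  ext c d
  by_cases hc : c = a <;> by_cases hd : d = b <;>
    simp [Matrix.mul_apply, single, hc, hd, hdiag a b, hoff, Ne.symm]

theorem mem_range_scalar_of_krausMap_eq_id {n ι : Type*} [Fintype n] [DecidableEq n] [Fintype ι]
    {W : ι → Matrix n n ℂ} (h : krausMap W = LinearMap.id) (k : ι) :
    W k ∈ Set.range (scalar n) := by
  have hentry : ∀ i j a b, ∑ t, W t i a * star (W t j b) = single a b (1 : ℂ) i j := by
    intro i j a b
    simpa [krausMap_apply, Matrix.sum_apply, mul_single_one_mul_conjTranspose_apply] using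
      congr_fun (congr_fun (LinearMap.congr_fun h (single a b 1)) i) j
  have hzero : ∀ v : ι → ℂ, ∑ t, v t * star (v t) = 0 → v k = 0 := fun v hv =>
    congr_fun (dotProduct_star_self_eq_zero.mp (by simpa [dotProduct, mul_comm] using hv)) k
  -- `hentry i i j j` kills the off-diagonal entries; on the diagonal,
  -- `∑ₜ |Wₜ i i - Wₜ j j|² = 1 - 1 - 1 + 1`.
  refine mem_range_scalar_of_apply (fun i j hij => hzero (fun t => W t i j) ?_) fun i j => ?_
  · simpa [single, Ne.symm hij] using hentry i i j j
  · by_cases hij : i = j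
    · rw [hij]
    refine sub_eq_zero.mp (hzero (fun t => W t i i - W t j j) ?_)
    simp only [star_sub, sub_mul, mul_sub, Finset.sum_sub_distrib, hentry]
    simp

theorem krausMap_one_mul_krausMap_mul {m n ι : Type*} [Fintype m] [Fintype n] [DecidableEq n]
    [Fintype ι] {V : ι → Matrix m n ℂ} (hV : ∀ s t a, Commute ((V s)ᴴ * V t) a)
    (a b : Matrix n n ℂ) :
    krausMap V 1 * krausMap V (a * b) = krausMap V a * krausMap V b := by
  simp only [krausMap_apply, Finset.sum_mul_sum]
  refine Finset.sum_congr rfl fun s _ => Finset.sum_congr rfl fun t _ => ?_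
  calc V s * (1 : Matrix n n ℂ) * (V s)ᴴ * (V t * (a * b) * (V t)ᴴ)
      = V s * ((V s)ᴴ * V t * a * b) * (V t)ᴴ := by simp only [Matrix.mul_one, Matrix.mul_assoc]
    _ = V s * (a * ((V s)ᴴ * V t) * b) * (V t)ᴴ := by rw [(hV s t a).eq]
    _ = V s * a * (V s)ᴴ * (V t * b * (V t)ᴴ) := by simp only [Matrix.mul_assoc]

theorem stmt_6_general (n : ℕ)
    (α : Fin (n * n) → Matrix (Fin n) (Fin n) ℂ)
    (horth : ∀ i j, hsInner (α i) (α j) = if i = j then 1 else 0)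
    (hspan : Submodule.span ℂ (Set.range α) = ⊤)
    (δ : Matrix (Fin n) (Fin n) ℂ →ₗ[ℂ] Matrix (Fin n × Fin n) (Fin n × Fin n) ℂ)
    (hδ : ∀ i, δ (α i) = α i ⊗ₖ α i)
    (hCP : IsCompletelyPositive δ) :
    ∀ a b : Matrix (Fin n) (Fin n) ℂ, δ 1 * δ (a * b) = δ a * δ b := by
  obtain ⟨m, V, rfl⟩ := hCP.exists_eq_krausMap
  have hid : krausMap (fun p : Fin m × Fin m => (V p.1)ᴴ * V p.2) = LinearMap.id := by
    ext1 a
    exact (krausMap_krausMap (fun k => (V k)ᴴ) V a).symm.trans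
      (LinearMap.congr_fun (krausMap_conjTranspose_comp_eq_id horth hspan hδ) a)
  refine krausMap_one_mul_krausMap_mul fun s t a => ?_
  obtain ⟨r, hr⟩ := mem_range_scalar_of_krausMap_eq_id hid (s, t)
  rw [← hr]
  exact scalar_commute r (Commute.all r) a

/-- If δ is completely positive then δ(1)·δ(ab) = δ(a)·δ(b) for all a, b. -/
theorem stmt_6 (n : ℕ) (hn : 1 ≤ n)
    (α : Fin (n * n) → Matrix (Fin n) (Fin n) ℂ)
    (horth : ∀ i j, hsInner (α i) (α j) = if i = j then 1 else 0)
    (hspan : Submodule.span ℂ (Set.range α) = ⊤)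
    (δ : Matrix (Fin n) (Fin n) ℂ →ₗ[ℂ] Matrix (Fin n × Fin n) (Fin n × Fin n) ℂ)
    (hδ : ∀ i, δ (α i) = α i ⊗ₖ α i)
    (hCP : IsCompletelyPositive δ) :
    ∀ a b : Matrix (Fin n) (Fin n) ℂ, δ 1 * δ (a * b) = δ a * δ b :=
  stmt_6_general n α horth hspan δ hδ hCP
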